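/- Maximum principle for the 2-to-1 junction scheme with the maximum-flux coupling: if the initial data satisfy 0 ≤ ρ⁰_{e,j} ≤ ρ_e_max for all j ≤ −1, e ∈ {1,2}, and 0 ≤ ρ⁰_{3,j} ≤ ρ₃_max for all j ≥ 0, and the CFL condition λ ≤ 1/(γ₀ ‖v'‖ ‖ρ‖ + 2‖v‖) holds, then for every n ∈ ℕ one has 0 ≤ ρⁿ_{e,j} ≤ ρ_e_max for all j ≤ −1, e ∈ {1,2}, and 0 ≤ ρⁿ_{3,j} ≤ ρ₃_max for all j ≥ 0. -/

import Mathlib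

open MeasureTheory


lemma aux_sum_shift (f : ℤ → ℝ) (a b : ℤ) :
    ∑ k ∈ Finset.Icc a b, f (k + 1) = ∑ k ∈ Finset.Icc (a+1) (b+1), f k := by
  rw [← Finset.map_add_right_Icc a b 1, Finset.sum_map]
  rfl

lemma aux_sum_bot (f : ℤ → ℝ) {a b : ℤ} (h : a ≤ b) :
    ∑ k ∈ Finset.Icc a b, f k = f a + ∑ k ∈ Finset.Icc (a+1) b, f k := by
  have he : Finset.Icc a b = insert a (Finset.Icc (a+1) b) := by
    ext k; simp only [Finset.mem_Icc, Finset.mem_insert]; omega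
  rw [he, Finset.sum_insert (by simp only [Finset.mem_Icc]; omega)]

lemma aux_shift_body (γ : ℤ → ℝ) (u : ℤ → ℝ) (j a b : ℤ) :
    ∑ k ∈ Finset.Icc (a+1) (b+1), γ k * u (j - 1 + k + 1)
      = ∑ k ∈ Finset.Icc a b, γ (k+1) * u (j + k + 1) := by
  rw [← aux_sum_shift (fun k => γ k * u (j - 1 + k + 1)) a b]
  refine Finset.sum_congr rfl fun k _ => ?_
  show γ (k+1) * u (j - 1 + (k+1) + 1) = γ (k+1) * u (j + k + 1)
  rw [show j - 1 + (k+1) + 1 = j + k + 1 by ring]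

lemma aux_split_bot (γ : ℤ → ℝ) (u : ℤ → ℝ) (j b : ℤ) (hb : 0 ≤ b) :
    ∑ k ∈ Finset.Icc (0:ℤ) b, γ k * u (j - 1 + k + 1)
      = γ 0 * u j + ∑ k ∈ Finset.Icc (0:ℤ) (b-1), γ (k+1) * u (j + k + 1) := by
  rw [aux_sum_bot (fun k => γ k * u (j - 1 + k + 1)) hb]
  congr 1
  · show γ 0 * u (j - 1 + 0 + 1) = γ 0 * u j
    rw [show j - 1 + 0 + 1 = j by ring]
  · have h := aux_shift_body γ u j 0 (b-1)
    rw [show ((0:ℤ)+1) = 1 from rfl, show b-1+1 = b by ring] at h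
    exact h

lemma aux_core (γ φ : ℤ → ℝ) (a b b' : ℤ) (hbb : b' ≤ b)
    (hφ : ∀ k, a ≤ k → k ≤ b → 0 ≤ φ k)
    (hγ : ∀ k, a ≤ k → k ≤ b → 0 ≤ γ k)
    (hγm : ∀ k, a ≤ k → k ≤ b' → γ (k+1) ≤ γ k) :
    ∑ k ∈ Finset.Icc a b', γ (k+1) * φ k ≤ ∑ k ∈ Finset.Icc a b, γ k * φ k := by
  calc ∑ k ∈ Finset.Icc a b', γ (k+1) * φ k
      ≤ ∑ k ∈ Finset.Icc a b', γ k * φ k := by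
        refine Finset.sum_le_sum fun k hk => ?_
        rw [Finset.mem_Icc] at hk
        exact mul_le_mul_of_nonneg_right (hγm k hk.1 hk.2) (hφ k hk.1 (hk.2.trans hbb))
    _ ≤ ∑ k ∈ Finset.Icc a b, γ k * φ k := by
        refine Finset.sum_le_sum_of_subset_of_nonneg (Finset.Icc_subset_Icc_right hbb) ?_
        intro k hk _
        rw [Finset.mem_Icc] at hk
        exact mul_nonneg (hγ k hk.1 hk.2) (hφ k hk.1 hk.2)

lemma aux_bnd (γ φ : ℤ → ℝ) (N : ℤ) (nv : ℝ) (hnv : 0 ≤ nv)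
    (hsum : ∑ k ∈ Finset.Icc (0:ℤ) (N-1), γ k = 1)
    (hγ : ∀ k, 0 ≤ k → k ≤ N-1 → 0 ≤ γ k)
    (a b : ℤ) (ha : 0 ≤ a) (hb : b ≤ N-1)
    (hφ : ∀ k, a ≤ k → k ≤ b → 0 ≤ φ k ∧ φ k ≤ nv) :
    0 ≤ ∑ k ∈ Finset.Icc a b, γ k * φ k ∧ ∑ k ∈ Finset.Icc a b, γ k * φ k ≤ nv := by
  constructor
  · refine Finset.sum_nonneg fun k hk => ?_
    rw [Finset.mem_Icc] at hk
    exact mul_nonneg (hγ k (ha.trans hk.1) (hk.2.trans hb)) ((hφ k hk.1 hk.2).1)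
  · calc ∑ k ∈ Finset.Icc a b, γ k * φ k
        ≤ ∑ k ∈ Finset.Icc a b, γ k * nv := by
          refine Finset.sum_le_sum fun k hk => ?_
          rw [Finset.mem_Icc] at hk
          exact mul_le_mul_of_nonneg_left ((hφ k hk.1 hk.2).2)
            (hγ k (ha.trans hk.1) (hk.2.trans hb))
      _ = (∑ k ∈ Finset.Icc a b, γ k) * nv := by rw [Finset.sum_mul]
      _ ≤ (∑ k ∈ Finset.Icc (0:ℤ) (N-1), γ k) * nv := by
          refine mul_le_mul_of_nonneg_right ?_ hnv
          refine Finset.sum_le_sum_of_subset_of_nonneg (Finset.Icc_subset_Icc ha hb) ?_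
          intro k hk _
          rw [Finset.mem_Icc] at hk
          exact hγ k hk.1 hk.2
      _ = nv := by rw [hsum, one_mul]

lemma aux_junc (M r1 r2 q1 q2 : ℝ) (h1 : 0 ≤ r1) (h2 : 0 ≤ r2)
    (hq1 : 0 ≤ q1) (hq2 : 0 ≤ q2) (hq : q1 + q2 = 1) :
    min r1 (max (q1*M) (M-r2)) + min r2 (max (q2*M) (M-r1)) ≤ M := by
  have hqM : q1*M + q2*M = M := by rw [← add_mul, hq, one_mul]
  rcases le_total r2 (q2*M) with h | h
  · have hx1 : max (q1*M) (M-r2) ≤ M - r2 := max_le (by linarith) le_rfl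
    have := min_le_right r1 (max (q1*M) (M-r2))
    have := min_le_left r2 (max (q2*M) (M-r1))
    linarith
  · rcases le_total r1 (q1*M) with h' | h'
    · have hx2 : max (q2*M) (M-r1) ≤ M - r1 := max_le (by linarith) le_rfl
      have := min_le_left r1 (max (q1*M) (M-r2))
      have := min_le_right r2 (max (q2*M) (M-r1))
      linarith
    · have hx1 : max (q1*M) (M-r2) ≤ q1*M := max_le le_rfl (by linarith)
      have hx2 : max (q2*M) (M-r1) ≤ q2*M := max_le le_rfl (by linarith)
      have := min_le_right r1 (max (q1*M) (M-r2))
      have := min_le_right r2 (max (q2*M) (M-r1))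
      linarith

lemma aux_sup_le {s : Set ℝ} {f : ℝ → ℝ} (hs : IsCompact s) (hf : ContinuousOn f s)
    {x : ℝ} (hx : x ∈ s) : f x ≤ sSup (f '' s) :=
  le_csSup (hs.image_of_continuousOn hf).bddAbove ⟨x, hx, rfl⟩

lemma aux_deriv_bdd {M : ℝ} (hM : 0 < M) {v : ℝ → ℝ}
    (hv : ContDiffOn ℝ 2 v (Set.Icc 0 M)) :
    BddAbove ((fun x => |deriv v x|) '' Set.Icc 0 M) := by
  have hu : UniqueDiffOn ℝ (Set.Icc (0:ℝ) M) := uniqueDiffOn_Icc hM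
  have hd : ContinuousOn (derivWithin v (Set.Icc 0 M)) (Set.Icc 0 M) :=
    hv.continuousOn_derivWithin hu (by norm_num)
  obtain ⟨C, hC⟩ := (isCompact_Icc.image_of_continuousOn
    (continuous_abs.comp_continuousOn hd)).bddAbove
  refine ⟨max C (max (|deriv v 0|) (|deriv v M|)), ?_⟩
  rintro y ⟨x, hx, rfl⟩
  rcases eq_or_lt_of_le hx.1 with h0 | h0
  · simp only [← h0]
    exact le_max_of_le_right (le_max_left _ _)
  rcases eq_or_lt_of_le hx.2 with hMx | hMx
  · simp only [hMx]
    exact le_max_of_le_right (le_max_right _ _)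
  · have hdx : DifferentiableAt ℝ v x :=
      (hv.differentiableOn two_ne_zero).differentiableAt (Icc_mem_nhds h0 hMx)
    have heq : derivWithin v (Set.Icc 0 M) x = deriv v x := hdx.derivWithin (hu x hx)
    have hmem : |derivWithin v (Set.Icc 0 M) x| ∈
        (fun y => |derivWithin v (Set.Icc 0 M) y|) '' Set.Icc 0 M := ⟨x, hx, rfl⟩
    have := hC hmem
    rw [heq] at this
    exact le_max_of_le_left this

lemma aux_lip {M K : ℝ} (hM : 0 < M) {v : ℝ → ℝ}
    (hv : ContDiffOn ℝ 2 v (Set.Icc 0 M)) (hvM : v M = 0)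
    (hBdd : BddAbove ((fun x => |deriv v x|) '' Set.Icc 0 M))
    (hK : sSup ((fun x => |deriv v x|) '' Set.Icc 0 M) ≤ K) :
    ∀ x ∈ Set.Icc (0:ℝ) M, v x ≤ K * (M - x) := by
  have hK0 : 0 ≤ K := by
    have : |deriv v 0| ≤ sSup ((fun x => |deriv v x|) '' Set.Icc 0 M) :=
      le_csSup hBdd ⟨0, Set.mem_Icc.2 ⟨le_rfl, hM.le⟩, rfl⟩
    exact (abs_nonneg _).trans (this.trans hK)
  intro x hx
  rcases eq_or_lt_of_le hx.2 with h | h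
  · rw [h, hvM, sub_self, mul_zero]
  · obtain ⟨c, hc, hslope⟩ := exists_deriv_eq_slope v h
      (hv.continuousOn.mono (Set.Icc_subset_Icc hx.1 le_rfl))
      (fun y hy => ((hv.differentiableOn two_ne_zero).differentiableAt
        (Icc_mem_nhds (hx.1.trans_lt hy.1) hy.2)).differentiableWithinAt)
    have hcm : c ∈ Set.Icc (0:ℝ) M := ⟨hx.1.trans hc.1.le, hc.2.le⟩
    have hcb : |deriv v c| ≤ K := (le_csSup hBdd ⟨c, hcm, rfl⟩).trans hK
    have hMx : 0 < M - x := by linarith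
    rw [hvM] at hslope
    have hvx : v x = -(deriv v c) * (M - x) := by
      field_simp at hslope
      linarith [hslope]
    rw [hvx]
    exact mul_le_mul_of_nonneg_right ((neg_le_abs _).trans hcb) hMx.le

lemma aux_deriv_nn {M K : ℝ} (hM : 0 < M) {v : ℝ → ℝ}
    (hBdd : BddAbove ((fun x => |deriv v x|) '' Set.Icc 0 M))
    (hK : sSup ((fun x => |deriv v x|) '' Set.Icc 0 M) ≤ K) : 0 ≤ K := by
  have : |deriv v 0| ≤ sSup ((fun x => |deriv v x|) '' Set.Icc 0 M) :=
    le_csSup hBdd ⟨0, Set.mem_Icc.2 ⟨le_rfl, hM.le⟩, rfl⟩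
  exact (abs_nonneg _).trans (this.trans hK)

section
variable (η Δx : ℝ) (hΔx : 0 < Δx) (Nη : ℕ) (hNη : 0 < Nη) (hηN : η = (Nη : ℝ) * Δx)
  (ω : ℝ → ℝ)
  (hω : ContDiffOn ℝ 1 ω (Set.Icc 0 η))
  (hωmono : AntitoneOn ω (Set.Icc 0 η))
  (hωnn : ∀ x ∈ Set.Icc (0 : ℝ) η, 0 ≤ ω x)
  (γ : ℤ → ℝ)
  (hγ : ∀ k : ℤ, 0 ≤ k → k ≤ (Nη : ℤ) - 1 →
    γ k = ∫ x in ((k : ℝ) * Δx)..(((k : ℝ) + 1) * Δx), ω x)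

include hΔx hηN hω in
lemma aux_om_int {a b : ℝ} (ha : 0 ≤ a) (hab : a ≤ b) (hb : b ≤ η) :
    IntervalIntegrable ω volume a b := by
  refine (hω.continuousOn.mono ?_).intervalIntegrable
  rw [Set.uIcc_of_le hab]
  exact Set.Icc_subset_Icc ha hb

include hΔx hηN hωnn hγ in
lemma aux_gamma_nn : ∀ k : ℤ, 0 ≤ k → k ≤ (Nη : ℤ) - 1 → 0 ≤ γ k := by
  intro k hk1 hk2
  rw [hγ k hk1 hk2]
  have hk1' : (0:ℝ) ≤ (k:ℝ) := by exact_mod_cast hk1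
  have hk2' : (k:ℝ) + 1 ≤ (Nη:ℝ) := by
    have : k + 1 ≤ (Nη:ℤ) := by omega
    exact_mod_cast this
  refine intervalIntegral.integral_nonneg (by nlinarith) ?_
  intro x hx
  refine hωnn x ⟨by nlinarith [hx.1], ?_⟩
  have : ((k:ℝ)+1)*Δx ≤ η := by rw [hηN]; nlinarith
  linarith [hx.2]

include hΔx hηN hω hωmono hωnn hγ in
lemma aux_gamma_mono : ∀ k l : ℤ, 0 ≤ k → k ≤ l → l ≤ (Nη : ℤ) - 1 → γ l ≤ γ k := by
  intro k l hk hkl hl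
  rw [hγ k hk (hkl.trans hl), hγ l (hk.trans hkl) hl]
  have hk' : (0:ℝ) ≤ (k:ℝ) := by exact_mod_cast hk
  have hkl' : (k:ℝ) ≤ (l:ℝ) := by exact_mod_cast hkl
  have hl' : (l:ℝ) + 1 ≤ (Nη:ℝ) := by
    have : l + 1 ≤ (Nη:ℤ) := by omega
    exact_mod_cast this
  set d : ℝ := ((l:ℝ) - (k:ℝ)) * Δx with hd
  have hd0 : 0 ≤ d := by nlinarith
  have hshift : (∫ x in ((l:ℝ) * Δx)..(((l:ℝ) + 1) * Δx), ω x)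
      = ∫ x in ((k:ℝ) * Δx)..(((k:ℝ) + 1) * Δx), ω (x + d) := by
    rw [intervalIntegral.integral_comp_add_right]
    congr 1 <;> ring
  rw [hshift]
  have hab : (k:ℝ) * Δx ≤ ((k:ℝ)+1) * Δx := by nlinarith
  have hsub : ∀ x ∈ Set.Icc ((k:ℝ)*Δx) (((k:ℝ)+1)*Δx), x ∈ Set.Icc (0:ℝ) η := by
    intro x hx
    exact ⟨by nlinarith [hx.1], by rw [hηN]; nlinarith [hx.2]⟩
  have hsub2 : ∀ x ∈ Set.Icc ((k:ℝ)*Δx) (((k:ℝ)+1)*Δx), x + d ∈ Set.Icc (0:ℝ) η := by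
    intro x hx
    exact ⟨by nlinarith [hx.1], by rw [hηN, hd]; nlinarith [hx.2]⟩
  refine intervalIntegral.integral_mono_on hab ?_ ?_ ?_
  · refine ContinuousOn.intervalIntegrable ?_
    rw [Set.uIcc_of_le hab]
    exact hω.continuousOn.comp (Continuous.continuousOn (by continuity)) hsub2
  · exact aux_om_int η Δx hΔx Nη hηN ω hω (by positivity) hab (by rw [hηN]; nlinarith)
  · intro x hx
    exact hωmono (hsub x hx) (hsub2 x hx) (by linarith [hd0])

include hΔx hNη hηN hω hωnn hγ in
lemma aux_gamma_sum (hωint : (∫ x in (0 : ℝ)..η, ω x) = 1) :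
    ∑ k ∈ Finset.Icc (0:ℤ) ((Nη:ℤ)-1), γ k = 1 := by
  have key : ∀ m : ℕ, m ≤ Nη →
      ∑ k ∈ Finset.Icc (0:ℤ) ((m:ℤ)-1), γ k = ∫ x in (0:ℝ)..((m:ℝ)*Δx), ω x := by
    intro m
    induction m with
    | zero => intro _; simp
    | succ m ih =>
      intro hm
      have hm' : m ≤ Nη := by omega
      have hsplit : Finset.Icc (0:ℤ) (((m:ℕ)+1:ℤ)-1)
          = insert (m:ℤ) (Finset.Icc (0:ℤ) ((m:ℤ)-1)) := by
        ext k; simp only [Finset.mem_Icc, Finset.mem_insert]; omega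
      have hmN : (m:ℤ) ≤ (Nη:ℤ) - 1 := by omega
      have hmR : ((m:ℝ)+1) ≤ (Nη:ℝ) := by exact_mod_cast (by omega : (m:ℤ)+1 ≤ (Nη:ℤ))
      have hmR0 : (0:ℝ) ≤ (m:ℝ) := by positivity
      have h1 : ∑ k ∈ Finset.Icc (0:ℤ) (((m+1:ℕ):ℤ)-1), γ k
          = ∑ k ∈ Finset.Icc (0:ℤ) ((m:ℤ)-1), γ k + γ (m:ℤ) := by
        push_cast
        rw [hsplit, Finset.sum_insert (by simp only [Finset.mem_Icc]; omega)]
        ring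
      rw [h1, ih hm', hγ (m:ℤ) (by positivity) hmN]
      push_cast
      rw [intervalIntegral.integral_add_adjacent_intervals]
      · exact aux_om_int η Δx hΔx Nη hηN ω hω le_rfl (by nlinarith) (by rw [hηN]; nlinarith)
      · exact aux_om_int η Δx hΔx Nη hηN ω hω (by positivity) (by nlinarith)
          (by rw [hηN]; nlinarith)
  have hkey := key Nη le_rfl
  rw [← hηN] at hkey
  rw [hkey, hωint]

end

/-- Maximum principle for the 2-to-1 junction scheme with the maximum-flux
coupling `g_e(ρ, r, V) = min(ρ, max(q_e ρ₃max, ρ₃max - r)) V`: if the initial data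
satisfy `0 ≤ ρ⁰_{e,j} ≤ ρ_emax` for all `j ≤ -1`, `e ∈ {1,2}`, and
`0 ≤ ρ⁰_{3,j} ≤ ρ₃max` for all `j ≥ 0`, and the CFL condition
`λ ≤ 1/(γ₀ ‖v'‖ ‖ρ‖ + 2‖v‖)` holds, then the same bounds propagate to every time
step `n`. -/
theorem stmt_8
    (ρ1max ρ2max ρ3max : ℝ)
    (hρ1max : 0 < ρ1max) (hρ2max : 0 < ρ2max) (hρ3max : 0 < ρ3max)
    (v1 v2 v3 : ℝ → ℝ)
    (hv1 : ContDiffOn ℝ 2 v1 (Set.Icc 0 ρ1max))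
    (hv1mono : AntitoneOn v1 (Set.Icc 0 ρ1max))
    (hv1nn : ∀ x ∈ Set.Icc (0 : ℝ) ρ1max, 0 ≤ v1 x)
    (hv1max : v1 ρ1max = 0)
    (hv2 : ContDiffOn ℝ 2 v2 (Set.Icc 0 ρ2max))
    (hv2mono : AntitoneOn v2 (Set.Icc 0 ρ2max))
    (hv2nn : ∀ x ∈ Set.Icc (0 : ℝ) ρ2max, 0 ≤ v2 x)
    (hv2max : v2 ρ2max = 0)
    (hv3 : ContDiffOn ℝ 2 v3 (Set.Icc 0 ρ3max))
    (hv3mono : AntitoneOn v3 (Set.Icc 0 ρ3max))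
    (hv3nn : ∀ x ∈ Set.Icc (0 : ℝ) ρ3max, 0 ≤ v3 x)
    (hv3max : v3 ρ3max = 0)
    (η Δx : ℝ) (hη : 0 < η) (hΔx : 0 < Δx)
    (Nη : ℕ) (hNη : 0 < Nη) (hηN : η = (Nη : ℝ) * Δx)
    (ω : ℝ → ℝ)
    (hω : ContDiffOn ℝ 1 ω (Set.Icc 0 η))
    (hωmono : AntitoneOn ω (Set.Icc 0 η))
    (hωnn : ∀ x ∈ Set.Icc (0 : ℝ) η, 0 ≤ ω x)
    (hωint : (∫ x in (0 : ℝ)..η, ω x) = 1)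
    (γ : ℤ → ℝ)
    (hγ : ∀ k : ℤ, 0 ≤ k → k ≤ (Nη : ℤ) - 1 →
      γ k = ∫ x in ((k : ℝ) * Δx)..(((k : ℝ) + 1) * Δx), ω x)
    -- the norms ‖v‖, ‖v'‖, ‖ρ‖
    (nv nvd nρ : ℝ)
    (hnv : nv = max (sSup (v1 '' Set.Icc 0 ρ1max))
      (max (sSup (v2 '' Set.Icc 0 ρ2max)) (sSup (v3 '' Set.Icc 0 ρ3max))))
    (hnvd : nvd = max (sSup ((fun x => |deriv v1 x|) '' Set.Icc 0 ρ1max))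
      (max (sSup ((fun x => |deriv v2 x|) '' Set.Icc 0 ρ2max))
        (sSup ((fun x => |deriv v3 x|) '' Set.Icc 0 ρ3max))))
    (hnρ : nρ = max ρ1max (max ρ2max ρ3max))
    -- priority parameters
    (q1 q2 : ℝ) (hq1 : 0 ≤ q1) (hq2 : 0 ≤ q2) (hq : q1 + q2 = 1)
    -- the maximum-flux coupling functions
    (g1 g2 : ℝ → ℝ → ℝ → ℝ)
    (hg1 : ∀ r r' V : ℝ, g1 r r' V = min r (max (q1 * ρ3max) (ρ3max - r')) * V)
    (hg2 : ∀ r r' V : ℝ, g2 r r' V = min r (max (q2 * ρ3max) (ρ3max - r')) * V)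
    -- the scheme
    (lam : ℝ) (hlam : 0 < lam)
    (hCFL : lam ≤ 1 / (γ 0 * nvd * nρ + 2 * nv))
    (ρ1 ρ2 ρ3 : ℕ → ℤ → ℝ)
    (V1 V2 V3 : ℕ → ℤ → ℝ)
    (hV1 : ∀ n : ℕ, ∀ j : ℤ, j ≤ -1 →
      V1 n j = ∑ k ∈ Finset.Icc (0 : ℤ) (min (-j - 2) ((Nη : ℤ) - 1)),
        γ k * v1 (ρ1 n (j + k + 1)))
    (hV2 : ∀ n : ℕ, ∀ j : ℤ, j ≤ -1 →
      V2 n j = ∑ k ∈ Finset.Icc (0 : ℤ) (min (-j - 2) ((Nη : ℤ) - 1)),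
        γ k * v2 (ρ2 n (j + k + 1)))
    (hV3 : ∀ n : ℕ, ∀ j : ℤ,
      V3 n j = ∑ k ∈ Finset.Icc (max (-j - 1) 0) ((Nη : ℤ) - 1),
        γ k * v3 (ρ3 n (j + k + 1)))
    (F1 F2 F3 : ℕ → ℤ → ℝ)
    (hF1 : ∀ n : ℕ, ∀ j : ℤ, j ≤ -1 →
      F1 n j = ρ1 n j * V1 n j + g1 (ρ1 n j) (ρ2 n (-1)) (V3 n j))
    (hF2 : ∀ n : ℕ, ∀ j : ℤ, j ≤ -1 →
      F2 n j = ρ2 n j * V2 n j + g2 (ρ2 n j) (ρ1 n (-1)) (V3 n j))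
    (hF3 : ∀ n : ℕ, ∀ j : ℤ, 0 ≤ j → F3 n j = ρ3 n j * V3 n j)
    (hF3in : ∀ n : ℕ,
      F3 n (-1) = g1 (ρ1 n (-1)) (ρ2 n (-1)) (V3 n (-1))
        + g2 (ρ2 n (-1)) (ρ1 n (-1)) (V3 n (-1)))
    (hup1 : ∀ n : ℕ, ∀ j : ℤ, j ≤ -1 →
      ρ1 (n + 1) j = ρ1 n j - lam * (F1 n j - F1 n (j - 1)))
    (hup2 : ∀ n : ℕ, ∀ j : ℤ, j ≤ -1 →
      ρ2 (n + 1) j = ρ2 n j - lam * (F2 n j - F2 n (j - 1)))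
    (hup3 : ∀ n : ℕ, ∀ j : ℤ, 0 ≤ j →
      ρ3 (n + 1) j = ρ3 n j - lam * (F3 n j - F3 n (j - 1)))
    -- initial data bounds
    (hinit1 : ∀ j : ℤ, j ≤ -1 → ρ1 0 j ∈ Set.Icc 0 ρ1max)
    (hinit2 : ∀ j : ℤ, j ≤ -1 → ρ2 0 j ∈ Set.Icc 0 ρ2max)
    (hinit3 : ∀ j : ℤ, 0 ≤ j → ρ3 0 j ∈ Set.Icc 0 ρ3max) :
    ∀ n : ℕ,
      (∀ j : ℤ, j ≤ -1 → ρ1 n j ∈ Set.Icc 0 ρ1max) ∧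
      (∀ j : ℤ, j ≤ -1 → ρ2 n j ∈ Set.Icc 0 ρ2max) ∧
      (∀ j : ℤ, 0 ≤ j → ρ3 n j ∈ Set.Icc 0 ρ3max) := by
  have hN1 : (1:ℤ) ≤ (Nη:ℤ) := by exact_mod_cast hNη
  have γnn : ∀ k : ℤ, 0 ≤ k → k ≤ (Nη:ℤ)-1 → 0 ≤ γ k :=
    aux_gamma_nn (η := η) (Δx := Δx) (hΔx := hΔx) (Nη := Nη) (hηN := hηN) (ω := ω)
      (hωnn := hωnn) (γ := γ) (hγ := hγ)
  have γmono : ∀ k l : ℤ, 0 ≤ k → k ≤ l → l ≤ (Nη:ℤ)-1 → γ l ≤ γ k :=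
    aux_gamma_mono (η := η) (Δx := Δx) (hΔx := hΔx) (Nη := Nη) (hηN := hηN) (ω := ω)
      (hω := hω) (hωmono := hωmono) (hωnn := hωnn) (γ := γ) (hγ := hγ)
  have γsum : ∑ k ∈ Finset.Icc (0:ℤ) ((Nη:ℤ)-1), γ k = 1 :=
    aux_gamma_sum (η := η) (Δx := Δx) (hΔx := hΔx) (Nη := Nη) (hNη := hNη) (hηN := hηN)
      (ω := ω) (hω := hω) (hωnn := hωnn) (γ := γ) (hγ := hγ) hωint
  have hγ00 : 0 ≤ γ 0 := γnn 0 le_rfl (by omega)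
  -- velocity bounds
  have hv1ub : ∀ x ∈ Set.Icc (0:ℝ) ρ1max, v1 x ≤ nv := by
    intro x hx; rw [hnv]
    exact le_max_of_le_left (aux_sup_le isCompact_Icc hv1.continuousOn hx)
  have hv2ub : ∀ x ∈ Set.Icc (0:ℝ) ρ2max, v2 x ≤ nv := by
    intro x hx; rw [hnv]
    exact le_max_of_le_right
      (le_max_of_le_left (aux_sup_le isCompact_Icc hv2.continuousOn hx))
  have hv3ub : ∀ x ∈ Set.Icc (0:ℝ) ρ3max, v3 x ≤ nv := by
    intro x hx; rw [hnv]
    exact le_max_of_le_right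
      (le_max_of_le_right (aux_sup_le isCompact_Icc hv3.continuousOn hx))
  have hnv0 : 0 ≤ nv :=
    le_trans (hv1nn 0 ⟨le_rfl, hρ1max.le⟩) (hv1ub 0 ⟨le_rfl, hρ1max.le⟩)
  -- Lipschitz-type bounds
  have hB1 := aux_deriv_bdd hρ1max hv1
  have hB2 := aux_deriv_bdd hρ2max hv2
  have hB3 := aux_deriv_bdd hρ3max hv3
  have hnvd1 : sSup ((fun x => |deriv v1 x|) '' Set.Icc 0 ρ1max) ≤ nvd := by
    rw [hnvd]; exact le_max_left _ _
  have hnvd2 : sSup ((fun x => |deriv v2 x|) '' Set.Icc 0 ρ2max) ≤ nvd := by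
    rw [hnvd]; exact le_max_of_le_right (le_max_left _ _)
  have hnvd3 : sSup ((fun x => |deriv v3 x|) '' Set.Icc 0 ρ3max) ≤ nvd := by
    rw [hnvd]; exact le_max_of_le_right (le_max_right _ _)
  have hv1lip := aux_lip hρ1max hv1 hv1max hB1 hnvd1
  have hv2lip := aux_lip hρ2max hv2 hv2max hB2 hnvd2
  have hv3lip := aux_lip hρ3max hv3 hv3max hB3 hnvd3
  have hnvd0 : 0 ≤ nvd := aux_deriv_nn hρ1max hB1 hnvd1
  -- nρ facts
  have hM1ρ : ρ1max ≤ nρ := by rw [hnρ]; exact le_max_left _ _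
  have hM2ρ : ρ2max ≤ nρ := by rw [hnρ]; exact le_max_of_le_right (le_max_left _ _)
  have hM3ρ : ρ3max ≤ nρ := by rw [hnρ]; exact le_max_of_le_right (le_max_right _ _)
  have hnρ0 : 0 < nρ := lt_of_lt_of_le hρ1max hM1ρ
  -- CFL facts
  have hD0 : 0 ≤ γ 0 * nvd * nρ := mul_nonneg (mul_nonneg hγ00 hnvd0) hnρ0.le
  have hDpos : 0 < γ 0 * nvd * nρ + 2 * nv := by
    rcases lt_or_eq_of_le (by linarith : (0:ℝ) ≤ γ 0 * nvd * nρ + 2 * nv) with h | h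
    · exact h
    · exfalso; rw [← h] at hCFL; simp at hCFL; linarith
  have hCFL1 : lam * (γ 0 * nvd * nρ + 2 * nv) ≤ 1 := by
    rw [le_div_iff₀ hDpos] at hCFL; linarith
  have hlam0 : 0 ≤ lam := hlam.le
  intro n
  induction n with
  | zero => exact ⟨hinit1, hinit2, hinit3⟩
  | succ n ih =>
    obtain ⟨h1, h2, h3⟩ := ih
    -- bounds on the nonlocal velocities
    have hVb1 : ∀ j : ℤ, j ≤ -1 → 0 ≤ V1 n j ∧ V1 n j ≤ nv := by
      intro j hj
      rw [hV1 n j hj]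
      refine aux_bnd γ _ ((Nη:ℤ)) nv hnv0 γsum γnn 0 _ le_rfl (min_le_right _ _) ?_
      intro k hk1 hk2
      have hm : ρ1 n (j+k+1) ∈ Set.Icc 0 ρ1max := h1 _ (by omega)
      exact ⟨hv1nn _ hm, hv1ub _ hm⟩
    have hVb2 : ∀ j : ℤ, j ≤ -1 → 0 ≤ V2 n j ∧ V2 n j ≤ nv := by
      intro j hj
      rw [hV2 n j hj]
      refine aux_bnd γ _ ((Nη:ℤ)) nv hnv0 γsum γnn 0 _ le_rfl (min_le_right _ _) ?_
      intro k hk1 hk2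
      have hm : ρ2 n (j+k+1) ∈ Set.Icc 0 ρ2max := h2 _ (by omega)
      exact ⟨hv2nn _ hm, hv2ub _ hm⟩
    have hVb3 : ∀ j : ℤ, 0 ≤ V3 n j ∧ V3 n j ≤ nv := by
      intro j
      rw [hV3 n j]
      refine aux_bnd γ _ ((Nη:ℤ)) nv hnv0 γsum γnn _ _ (le_max_right _ _) le_rfl ?_
      intro k hk1 hk2
      have hm : ρ3 n (j+k+1) ∈ Set.Icc 0 ρ3max := h3 _ (by omega)
      exact ⟨hv3nn _ hm, hv3ub _ hm⟩
    -- difference estimates for the nonlocal velocities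
    have hd1 : ∀ j : ℤ, j ≤ -1 → -(γ 0 * v1 (ρ1 n j)) ≤ V1 n j - V1 n (j-1) := by
      intro j hj
      rw [hV1 n j hj, hV1 n (j-1) (by omega)]
      have hK'0 : (0:ℤ) ≤ min (-(j-1)-2) ((Nη:ℤ)-1) := by omega
      have hsecond : ∑ k ∈ Finset.Icc (0:ℤ) (min (-(j-1)-2) ((Nη:ℤ)-1)),
            γ k * v1 (ρ1 n (j - 1 + k + 1))
          = γ 0 * v1 (ρ1 n j)
            + ∑ k ∈ Finset.Icc (0:ℤ) (min (-(j-1)-2) ((Nη:ℤ)-1) - 1),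
                γ (k+1) * v1 (ρ1 n (j + k + 1)) :=
        aux_split_bot γ (fun i => v1 (ρ1 n i)) j _ hK'0
      rw [hsecond]
      have hcore : ∑ k ∈ Finset.Icc (0:ℤ) (min (-(j-1)-2) ((Nη:ℤ)-1) - 1),
            γ (k+1) * v1 (ρ1 n (j + k + 1))
          ≤ ∑ k ∈ Finset.Icc (0:ℤ) (min (-j-2) ((Nη:ℤ)-1)), γ k * v1 (ρ1 n (j + k + 1)) :=
        aux_core γ (fun k => v1 (ρ1 n (j + k + 1))) 0 _ _ (by omega)
          (fun k hk1 hk2 => hv1nn _ (h1 _ (by omega)))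
          (fun k hk1 hk2 => γnn k hk1 (by omega))
          (fun k hk1 hk2 => γmono k (k+1) hk1 (by omega) (by omega))
      linarith [hcore]
    have hd2 : ∀ j : ℤ, j ≤ -1 → -(γ 0 * v2 (ρ2 n j)) ≤ V2 n j - V2 n (j-1) := by
      intro j hj
      rw [hV2 n j hj, hV2 n (j-1) (by omega)]
      have hK'0 : (0:ℤ) ≤ min (-(j-1)-2) ((Nη:ℤ)-1) := by omega
      have hsecond : ∑ k ∈ Finset.Icc (0:ℤ) (min (-(j-1)-2) ((Nη:ℤ)-1)),
            γ k * v2 (ρ2 n (j - 1 + k + 1))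
          = γ 0 * v2 (ρ2 n j)
            + ∑ k ∈ Finset.Icc (0:ℤ) (min (-(j-1)-2) ((Nη:ℤ)-1) - 1),
                γ (k+1) * v2 (ρ2 n (j + k + 1)) :=
        aux_split_bot γ (fun i => v2 (ρ2 n i)) j _ hK'0
      rw [hsecond]
      have hcore : ∑ k ∈ Finset.Icc (0:ℤ) (min (-(j-1)-2) ((Nη:ℤ)-1) - 1),
            γ (k+1) * v2 (ρ2 n (j + k + 1))
          ≤ ∑ k ∈ Finset.Icc (0:ℤ) (min (-j-2) ((Nη:ℤ)-1)), γ k * v2 (ρ2 n (j + k + 1)) :=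
        aux_core γ (fun k => v2 (ρ2 n (j + k + 1))) 0 _ _ (by omega)
          (fun k hk1 hk2 => hv2nn _ (h2 _ (by omega)))
          (fun k hk1 hk2 => γnn k hk1 (by omega))
          (fun k hk1 hk2 => γmono k (k+1) hk1 (by omega) (by omega))
      linarith [hcore]
    have hd3 : ∀ j : ℤ, 0 ≤ j → -(γ 0 * v3 (ρ3 n j)) ≤ V3 n j - V3 n (j-1) := by
      intro j hj
      rw [hV3 n j, hV3 n (j-1)]
      rw [max_eq_right (by omega : -j-1 ≤ (0:ℤ)), max_eq_right (by omega : -(j-1)-1 ≤ (0:ℤ))]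
      have hsecond : ∑ k ∈ Finset.Icc (0:ℤ) ((Nη:ℤ)-1), γ k * v3 (ρ3 n (j - 1 + k + 1))
          = γ 0 * v3 (ρ3 n j)
            + ∑ k ∈ Finset.Icc (0:ℤ) ((Nη:ℤ)-1-1), γ (k+1) * v3 (ρ3 n (j + k + 1)) :=
        aux_split_bot γ (fun i => v3 (ρ3 n i)) j _ (by omega)
      rw [hsecond]
      have hcore : ∑ k ∈ Finset.Icc (0:ℤ) ((Nη:ℤ)-1-1), γ (k+1) * v3 (ρ3 n (j + k + 1))
          ≤ ∑ k ∈ Finset.Icc (0:ℤ) ((Nη:ℤ)-1), γ k * v3 (ρ3 n (j + k + 1)) :=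
        aux_core γ (fun k => v3 (ρ3 n (j + k + 1))) 0 _ _ (by omega)
          (fun k hk1 hk2 => hv3nn _ (h3 _ (by omega)))
          (fun k hk1 hk2 => γnn k hk1 (by omega))
          (fun k hk1 hk2 => γmono k (k+1) hk1 (by omega) (by omega))
      linarith [hcore]
    have hdW : ∀ j : ℤ, j ≤ -1 → 0 ≤ V3 n j - V3 n (j-1) := by
      intro j hj
      rw [hV3 n j, hV3 n (j-1)]
      rw [max_eq_left (by omega : (0:ℤ) ≤ -j-1), max_eq_left (by omega : (0:ℤ) ≤ -(j-1)-1)]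
      have hsh : ∑ k ∈ Finset.Icc (-(j-1)-1) ((Nη:ℤ)-1), γ k * v3 (ρ3 n (j - 1 + k + 1))
          = ∑ k ∈ Finset.Icc (-j-1) ((Nη:ℤ)-1-1), γ (k+1) * v3 (ρ3 n (j + k + 1)) := by
        have h := aux_shift_body γ (fun i => v3 (ρ3 n i)) j (-j-1) ((Nη:ℤ)-1-1)
        rw [show (-j-1)+1 = -(j-1)-1 by ring, show (Nη:ℤ)-1-1+1 = (Nη:ℤ)-1 by ring] at h
        exact h
      rw [hsh]
      have hcore : ∑ k ∈ Finset.Icc (-j-1) ((Nη:ℤ)-1-1), γ (k+1) * v3 (ρ3 n (j + k + 1))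
          ≤ ∑ k ∈ Finset.Icc (-j-1) ((Nη:ℤ)-1), γ k * v3 (ρ3 n (j + k + 1)) :=
        aux_core γ (fun k => v3 (ρ3 n (j + k + 1))) (-j-1) _ _ (by omega)
          (fun k hk1 hk2 => hv3nn _ (h3 _ (by omega)))
          (fun k hk1 hk2 => γnn k (by omega) (by omega))
          (fun k hk1 hk2 => γmono k (k+1) (by omega) (by omega) (by omega))
      linarith [hcore]
    refine ⟨?_, ?_, ?_⟩
    -- road 1
    · intro j hj
      have hjm : j - 1 ≤ -1 := by omega
      rw [Set.mem_Icc, hup1 n j hj, hF1 n j hj, hF1 n (j-1) hjm]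
      simp only [hg1]
      obtain ⟨hr0, hr1⟩ := h1 j hj
      obtain ⟨hs0, hs1⟩ := h1 (j-1) hjm
      obtain ⟨hU0, hU1⟩ := hVb1 j hj
      obtain ⟨hU'0, hU'1⟩ := hVb1 (j-1) hjm
      obtain ⟨hW0, hW1⟩ := hVb3 j
      obtain ⟨hW'0, hW'1⟩ := hVb3 (j-1)
      have hdU := hd1 j hj
      have hdW' := hdW j hj
      have hlip := hv1lip _ ⟨hr0, hr1⟩
      have hw0 := hv1nn _ ⟨hr0, hr1⟩
      set A := max (q1 * ρ3max) (ρ3max - ρ2 n (-1)) with hA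
      have hCnn : 0 ≤ A := le_max_of_le_left (mul_nonneg hq1 hρ3max.le)
      have hmr_le : min (ρ1 n j) A ≤ ρ1 n j := min_le_left _ _
      have hmr_nn : 0 ≤ min (ρ1 n j) A := le_min hr0 hCnn
      have hms_le : min (ρ1 n (j-1)) A ≤ ρ1 n (j-1) := min_le_left _ _
      have hms_nn : 0 ≤ min (ρ1 n (j-1)) A := le_min hs0 hCnn
      have hkey : min (ρ1 n (j-1)) A - min (ρ1 n j) A ≤ ρ1max - ρ1 n j := by
        rcases le_total (ρ1 n j) A with h | h
        · rw [min_eq_left h]; linarith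
        · rw [min_eq_right h]; linarith [min_le_right (ρ1 n (j-1)) A]
      have hUl : lam * V1 n j ≤ lam * nv := mul_le_mul_of_nonneg_left hU1 hlam0
      have hWl : lam * V3 n j ≤ lam * nv := mul_le_mul_of_nonneg_left hW1 hlam0
      have hfac : 0 ≤ 1 - lam * V1 n j - lam * V3 n j - lam * (γ 0 * nvd * nρ) := by
        linarith only [hCFL1, hUl, hWl, mul_nonneg hlam0 hD0]
      constructor
      · have b1 : 0 ≤ lam * (ρ1 n (j-1) * V1 n (j-1)) :=
          mul_nonneg hlam0 (mul_nonneg hs0 hU'0)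
        have b2 : 0 ≤ lam * (min (ρ1 n (j-1)) A * V3 n (j-1)) :=
          mul_nonneg hlam0 (mul_nonneg hms_nn hW'0)
        have b3 : 0 ≤ ρ1 n j * (1 - lam * V1 n j - lam * V3 n j) :=
          mul_nonneg hr0 (by linarith only [hfac, mul_nonneg hlam0 hD0])
        have b4 : 0 ≤ lam * V3 n j * (ρ1 n j - min (ρ1 n j) A) :=
          mul_nonneg (mul_nonneg hlam0 hW0) (by linarith)
        linarith only [b1, b2, b3, b4]
      · have a1 : 0 ≤ (ρ1max - ρ1 n j) *
            (1 - lam * V1 n j - lam * V3 n j - lam * (γ 0 * nvd * nρ)) :=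
          mul_nonneg (by linarith) hfac
        have a2 : 0 ≤ lam * ρ1 n (j-1) * (V1 n j - V1 n (j-1) + γ 0 * v1 (ρ1 n j)) :=
          mul_nonneg (mul_nonneg hlam0 hs0) (by linarith)
        have a3 : lam * ρ1 n (j-1) * (γ 0 * v1 (ρ1 n j))
            ≤ lam * nρ * (γ 0 * (nvd * (ρ1max - ρ1 n j))) := by
          have p1 : lam * (γ 0 * v1 (ρ1 n j)) * ρ1 n (j-1)
              ≤ lam * (γ 0 * v1 (ρ1 n j)) * nρ :=
            mul_le_mul_of_nonneg_left (hs1.trans hM1ρ)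
              (mul_nonneg hlam0 (mul_nonneg hγ00 hw0))
          have p2 : (lam * nρ * γ 0) * v1 (ρ1 n j)
              ≤ (lam * nρ * γ 0) * (nvd * (ρ1max - ρ1 n j)) :=
            mul_le_mul_of_nonneg_left hlip
              (mul_nonneg (mul_nonneg hlam0 hnρ0.le) hγ00)
          linarith only [p1, p2]
        have a4 : 0 ≤ lam * V1 n j * (ρ1max - ρ1 n (j-1)) :=
          mul_nonneg (mul_nonneg hlam0 hU0) (by linarith)
        have a5 : 0 ≤ lam * V3 n j *
            (min (ρ1 n j) A - min (ρ1 n (j-1)) A + (ρ1max - ρ1 n j)) :=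
          mul_nonneg (mul_nonneg hlam0 hW0) (by linarith)
        have a6 : 0 ≤ lam * min (ρ1 n (j-1)) A * (V3 n j - V3 n (j-1)) :=
          mul_nonneg (mul_nonneg hlam0 hms_nn) hdW'
        linarith only [a1, a2, a3, a4, a5, a6]
    -- road 2
    · intro j hj
      have hjm : j - 1 ≤ -1 := by omega
      rw [Set.mem_Icc, hup2 n j hj, hF2 n j hj, hF2 n (j-1) hjm]
      simp only [hg2]
      obtain ⟨hr0, hr1⟩ := h2 j hj
      obtain ⟨hs0, hs1⟩ := h2 (j-1) hjm
      obtain ⟨hU0, hU1⟩ := hVb2 j hj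
      obtain ⟨hU'0, hU'1⟩ := hVb2 (j-1) hjm
      obtain ⟨hW0, hW1⟩ := hVb3 j
      obtain ⟨hW'0, hW'1⟩ := hVb3 (j-1)
      have hdU := hd2 j hj
      have hdW' := hdW j hj
      have hlip := hv2lip _ ⟨hr0, hr1⟩
      have hw0 := hv2nn _ ⟨hr0, hr1⟩
      set A := max (q2 * ρ3max) (ρ3max - ρ1 n (-1)) with hA
      have hCnn : 0 ≤ A := le_max_of_le_left (mul_nonneg hq2 hρ3max.le)
      have hmr_le : min (ρ2 n j) A ≤ ρ2 n j := min_le_left _ _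
      have hmr_nn : 0 ≤ min (ρ2 n j) A := le_min hr0 hCnn
      have hms_le : min (ρ2 n (j-1)) A ≤ ρ2 n (j-1) := min_le_left _ _
      have hms_nn : 0 ≤ min (ρ2 n (j-1)) A := le_min hs0 hCnn
      have hkey : min (ρ2 n (j-1)) A - min (ρ2 n j) A ≤ ρ2max - ρ2 n j := by
        rcases le_total (ρ2 n j) A with h | h
        · rw [min_eq_left h]; linarith
        · rw [min_eq_right h]; linarith [min_le_right (ρ2 n (j-1)) A]
      have hUl : lam * V2 n j ≤ lam * nv := mul_le_mul_of_nonneg_left hU1 hlam0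
      have hWl : lam * V3 n j ≤ lam * nv := mul_le_mul_of_nonneg_left hW1 hlam0
      have hfac : 0 ≤ 1 - lam * V2 n j - lam * V3 n j - lam * (γ 0 * nvd * nρ) := by
        linarith only [hCFL1, hUl, hWl, mul_nonneg hlam0 hD0]
      constructor
      · have b1 : 0 ≤ lam * (ρ2 n (j-1) * V2 n (j-1)) :=
          mul_nonneg hlam0 (mul_nonneg hs0 hU'0)
        have b2 : 0 ≤ lam * (min (ρ2 n (j-1)) A * V3 n (j-1)) :=
          mul_nonneg hlam0 (mul_nonneg hms_nn hW'0)
        have b3 : 0 ≤ ρ2 n j * (1 - lam * V2 n j - lam * V3 n j) :=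
          mul_nonneg hr0 (by linarith only [hfac, mul_nonneg hlam0 hD0])
        have b4 : 0 ≤ lam * V3 n j * (ρ2 n j - min (ρ2 n j) A) :=
          mul_nonneg (mul_nonneg hlam0 hW0) (by linarith)
        linarith only [b1, b2, b3, b4]
      · have a1 : 0 ≤ (ρ2max - ρ2 n j) *
            (1 - lam * V2 n j - lam * V3 n j - lam * (γ 0 * nvd * nρ)) :=
          mul_nonneg (by linarith) hfac
        have a2 : 0 ≤ lam * ρ2 n (j-1) * (V2 n j - V2 n (j-1) + γ 0 * v2 (ρ2 n j)) :=
          mul_nonneg (mul_nonneg hlam0 hs0) (by linarith)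
        have a3 : lam * ρ2 n (j-1) * (γ 0 * v2 (ρ2 n j))
            ≤ lam * nρ * (γ 0 * (nvd * (ρ2max - ρ2 n j))) := by
          have p1 : lam * (γ 0 * v2 (ρ2 n j)) * ρ2 n (j-1)
              ≤ lam * (γ 0 * v2 (ρ2 n j)) * nρ :=
            mul_le_mul_of_nonneg_left (hs1.trans hM2ρ)
              (mul_nonneg hlam0 (mul_nonneg hγ00 hw0))
          have p2 : (lam * nρ * γ 0) * v2 (ρ2 n j)
              ≤ (lam * nρ * γ 0) * (nvd * (ρ2max - ρ2 n j)) :=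
            mul_le_mul_of_nonneg_left hlip
              (mul_nonneg (mul_nonneg hlam0 hnρ0.le) hγ00)
          linarith only [p1, p2]
        have a4 : 0 ≤ lam * V2 n j * (ρ2max - ρ2 n (j-1)) :=
          mul_nonneg (mul_nonneg hlam0 hU0) (by linarith)
        have a5 : 0 ≤ lam * V3 n j *
            (min (ρ2 n j) A - min (ρ2 n (j-1)) A + (ρ2max - ρ2 n j)) :=
          mul_nonneg (mul_nonneg hlam0 hW0) (by linarith)
        have a6 : 0 ≤ lam * min (ρ2 n (j-1)) A * (V3 n j - V3 n (j-1)) :=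
          mul_nonneg (mul_nonneg hlam0 hms_nn) hdW'
        linarith only [a1, a2, a3, a4, a5, a6]
    -- road 3
    · intro j hj
      rw [Set.mem_Icc, hup3 n j hj, hF3 n j hj]
      obtain ⟨hr0, hr1⟩ := h3 j hj
      obtain ⟨hW0, hW1⟩ := hVb3 j
      obtain ⟨hW'0, hW'1⟩ := hVb3 (j-1)
      have hdV := hd3 j hj
      have hlip := hv3lip _ ⟨hr0, hr1⟩
      have hw0 := hv3nn _ ⟨hr0, hr1⟩
      have hFnn : 0 ≤ F3 n (j-1) ∧ F3 n (j-1) ≤ ρ3max * V3 n (j-1) := by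
        rcases eq_or_lt_of_le hj with h0 | h0
        · have hj1 : j - 1 = -1 := by omega
          rw [hj1, hF3in n, hg1, hg2]
          obtain ⟨ha0, ha1⟩ := h1 (-1) (by omega)
          obtain ⟨hb0, hb1⟩ := h2 (-1) (by omega)
          obtain ⟨hV0, _⟩ := hVb3 (-1)
          have hjunc := aux_junc ρ3max (ρ1 n (-1)) (ρ2 n (-1)) q1 q2 ha0 hb0 hq1 hq2 hq
          have hA1 : 0 ≤ min (ρ1 n (-1)) (max (q1*ρ3max) (ρ3max - ρ2 n (-1))) :=
            le_min ha0 (le_max_of_le_left (mul_nonneg hq1 hρ3max.le))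
          have hA2 : 0 ≤ min (ρ2 n (-1)) (max (q2*ρ3max) (ρ3max - ρ1 n (-1))) :=
            le_min hb0 (le_max_of_le_left (mul_nonneg hq2 hρ3max.le))
          constructor
          · exact add_nonneg (mul_nonneg hA1 hV0) (mul_nonneg hA2 hV0)
          · linarith only [mul_le_mul_of_nonneg_right hjunc hV0]
        · have hj1 : 0 ≤ j - 1 := by omega
          rw [hF3 n (j-1) hj1]
          obtain ⟨hs0, hs1⟩ := h3 (j-1) hj1
          exact ⟨mul_nonneg hs0 hW'0, mul_le_mul_of_nonneg_right hs1 hW'0⟩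
      obtain ⟨hF0, hFub⟩ := hFnn
      have hWl : lam * V3 n j ≤ lam * nv := mul_le_mul_of_nonneg_left hW1 hlam0
      have hfac : 0 ≤ 1 - lam * V3 n j - lam * (γ 0 * nvd * nρ) := by
        linarith only [hCFL1, hWl, mul_nonneg hlam0 hnv0]
      constructor
      · have b3 : 0 ≤ ρ3 n j * (1 - lam * V3 n j) :=
          mul_nonneg hr0 (by linarith only [hfac, mul_nonneg hlam0 hD0])
        linarith only [b3, mul_nonneg hlam0 hF0]
      · have a1 : 0 ≤ (ρ3max - ρ3 n j) * (1 - lam * V3 n j - lam * (γ 0 * nvd * nρ)) :=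
          mul_nonneg (by linarith) hfac
        have a2 : 0 ≤ lam * ρ3max * (V3 n j - V3 n (j-1) + γ 0 * v3 (ρ3 n j)) :=
          mul_nonneg (mul_nonneg hlam0 hρ3max.le) (by linarith)
        have a3 : lam * ρ3max * (γ 0 * v3 (ρ3 n j))
            ≤ lam * nρ * (γ 0 * (nvd * (ρ3max - ρ3 n j))) := by
          have p1 : lam * (γ 0 * v3 (ρ3 n j)) * ρ3max
              ≤ lam * (γ 0 * v3 (ρ3 n j)) * nρ :=
            mul_le_mul_of_nonneg_left hM3ρ (mul_nonneg hlam0 (mul_nonneg hγ00 hw0))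
          have p2 : (lam * nρ * γ 0) * v3 (ρ3 n j)
              ≤ (lam * nρ * γ 0) * (nvd * (ρ3max - ρ3 n j)) :=
            mul_le_mul_of_nonneg_left hlip (mul_nonneg (mul_nonneg hlam0 hnρ0.le) hγ00)
          linarith only [p1, p2]
        have a4 : lam * F3 n (j-1) ≤ lam * (ρ3max * V3 n (j-1)) :=
          mul_le_mul_of_nonneg_left hFub hlam0
        linarith only [a1, a2, a3, a4]
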